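/- Let χ_1,…,χ_n : μ_d → ℂ* be multiplicative characters such that none of χ_1,…,χ_n and the product χ_1⋯χ_n is trivial. Then j(χ_1,…,χ_n) is an algebraic number, and every complex root of its minimal polynomial over ℚ has absolute value q^{(n−1)/2} (i.e., j(χ_1,…,χ_n) is a q-Weil number of weight n−1). -/

import Mathlib

open scoped BigOperators

noncomputable section

namespace MotivicGJ

variable {κ : Type} [Field κ] [Fintype κ] [DecidableEq κ]

/-- The map `κˣ → μ_d`, `m ↦ m ^ ((q - 1) / d)`, where `q = |κ|`. -/
def toMu (d : ℕ) (hd : d ∣ Fintype.card κ - 1) (m : κˣ) : rootsOfUnity d κ :=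
  ⟨m ^ ((Fintype.card κ - 1) / d), by
    rw [mem_rootsOfUnity, ← pow_mul, Nat.div_mul_cancel hd, ← Fintype.card_units]
    exact pow_card_eq_one⟩

/-- The Gauss sum `g(ψ, χ) = -∑_{m ∈ κˣ} ψ(m) χ(m^((q-1)/d))`. -/
def gSum (d : ℕ) (hd : d ∣ Fintype.card κ - 1) (ψ : AddChar κ ℂ)
    (χ : rootsOfUnity d κ →* ℂˣ) : ℂ :=
  - ∑ m : κˣ, ψ (m : κ) * (χ (toMu d hd m) : ℂ)

/-- The Jacobi sum `j(χ₁, …, χₙ)`. -/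
def jSum (d : ℕ) (hd : d ∣ Fintype.card κ - 1) {n : ℕ}
    (χ : Fin n → (rootsOfUnity d κ →* ℂˣ)) : ℂ :=
  (-1 : ℂ) ^ (n - 1) *
    ∑ m ∈ Finset.univ.filter (fun m : Fin n → κˣ => (∑ i, (m i : κ)) = 1),
      ∏ i, (χ i (toMu d hd (m i)) : ℂ)

/-- The conjugate (inverse) additive character `ψ̄(a) = ψ(-a)`. -/
def conjAddChar (ψ : AddChar κ ℂ) : AddChar κ ℂ where
  toFun a := ψ (-a)
  map_zero_eq_one' := by (try simp only []); rw [neg_zero]; exact ψ.map_zero_eq_one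
  map_add_eq_mul' a b := by (try simp only []); rw [neg_add]; exact ψ.map_add_eq_mul _ _

/-
Let `χ̃ᵢ(m) = χᵢ(m^((q-1)/d))` be the characters of `κ` induced by the `χᵢ`, and let `J(s)` be
the sum of `∏ χ̃ᵢ(mᵢ)` over `m ∈ (κˣ)ⁿ` with `∑ mᵢ = s`, so that `j = (-1)^(n-1) J(1)`.
Expanding a product of Gauss sums and sorting the terms by `s = ∑ mᵢ` gives
`∏ g(χ̃ᵢ) = ∑ₛ ψ(s) J(s)`. Rescaling `m ↦ t m` shows `J(t s) = (∏ χ̃ᵢ)(t) J(s)`; in particular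
`J(0) = 0` since `∏ χ̃ᵢ ≠ 1`, whence `∏ g(χ̃ᵢ) = g(∏ χ̃ᵢ) J(1)`. As `|g(χ)| = √q` for nontrivial
`χ` and primitive `ψ`, this gives `|j| = q^((n-1)/2)`.

The character values are roots of unity, so everything lives in the algebraic closure `K` of `ℚ`
in `ℂ`. Every conjugate of `j` is `σ j` for some embedding `σ : K → ℂ`, and `σ j` is the Jacobi
sum of the characters `σ ∘ χᵢ`, which are again nontrivial with nontrivial product.
-/

lemma _root_.AddChar.map_sum_eq_prod {A M ι : Type*} [AddCommMonoid A] [CommMonoid M]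
    (ψ : AddChar A M) (s : Finset ι) (f : ι → A) : ψ (∑ i ∈ s, f i) = ∏ i ∈ s, ψ (f i) := by
  induction s using Finset.cons_induction with
  | empty => simp
  | cons j s _ ih => rw [Finset.sum_cons, Finset.prod_cons, AddChar.map_add_eq_mul, ih]

lemma _root_.MulChar.prod_apply_units {R R' ι : Type*} [CommMonoid R] [CommMonoidWithZero R']
    (s : Finset ι) (χ : ι → MulChar R R') (a : Rˣ) : (∏ i ∈ s, χ i) a = ∏ i ∈ s, χ i a := by
  induction s using Finset.cons_induction with
  | empty => simp
  | cons j s _ ih =>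
    rw [Finset.prod_cons, Finset.prod_cons, MulChar.coeToFun_mul, Pi.mul_apply, ih]

lemma _root_.MulChar.isIntegral_apply {M k L : Type*} [CommMonoid M] [Finite Mˣ] [CommRing k]
    [CommRing L] [Algebra k L] (χ : MulChar M L) (a : M) : IsIntegral k (χ a) := by
  by_cases ha : IsUnit a
  · obtain ⟨u, rfl⟩ := ha
    have h : χ u ^ Nat.card Mˣ = 1 := by
      rw [← map_pow, ← Units.val_pow_eq_pow_val, pow_card_eq_one', Units.val_one, map_one]
    exact IsIntegral.of_pow Nat.card_pos (h ▸ isIntegral_one)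
  · rw [χ.map_nonunit ha]
    exact isIntegral_zero

section GaussSum

open Finset

variable {F R : Type*} [Field F] [Fintype F] [CommRing R]

lemma gaussSum_eq_sum_units [DecidableEq F] (χ : MulChar F R) (ψ : AddChar F R) :
    gaussSum χ ψ = ∑ u : Fˣ, χ u * ψ u := by
  rw [gaussSum, ← sum_erase_add _ _ (mem_univ 0), MulChar.map_zero, zero_mul, add_zero,
    sum_subtype _ (p := (· ≠ 0)) (by simp)]
  exact Fintype.sum_equiv unitsEquivNeZero.symm _ _ fun _ => rfl

lemma norm_gaussSum {χ : MulChar F ℂ} (hχ : χ ≠ 1) {ψ : AddChar F ℂ} (hψ : ψ.IsPrimitive) :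
    ‖gaussSum χ ψ‖ = √(Fintype.card F) := by
  have h := gaussSum_mul_gaussSum_eq_card hχ hψ
  rw [← star_gaussSum_eq, Complex.star_def, Complex.mul_conj, Complex.normSq_eq_norm_sq] at h
  rw [← Real.sqrt_sq (norm_nonneg _)]
  exact congrArg Real.sqrt (mod_cast h)

end GaussSum

section MultiJacobiSum

open Finset

variable {F R ι : Type*} [Field F] [Fintype F] [DecidableEq F] [CommRing R]
  [Fintype ι] [DecidableEq ι]

def multiJacobiSum (χ : ι → MulChar F R) (s : F) : R :=
  ∑ m : ι → Fˣ with ∑ i, (m i : F) = s, ∏ i, χ i (m i)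

lemma multiJacobiSum_unit_mul (χ : ι → MulChar F R) (t : Fˣ) (s : F) :
    multiJacobiSum χ (t * s) = (∏ i, χ i) t * multiJacobiSum χ s := by
  rw [multiJacobiSum, multiJacobiSum, mul_sum]
  refine (sum_equiv (Equiv.mulLeft fun _ => t) (fun m => ?_) fun m _ => ?_).symm
  · simp [← mul_sum, (Units.isUnit t).mul_right_inj]
  · simp [MulChar.prod_apply_units, prod_mul_distrib]

lemma multiJacobiSum_zero [IsDomain R] {χ : ι → MulChar F R} (hχ : ∏ i, χ i ≠ 1) :
    multiJacobiSum χ 0 = 0 := by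
  obtain ⟨t, ht⟩ := MulChar.ne_one_iff.mp hχ
  have h := multiJacobiSum_unit_mul χ t 0
  rw [mul_zero] at h
  have : ((∏ i, χ i) t - 1) * multiJacobiSum χ 0 = 0 := by rw [sub_mul, ← h]; ring
  exact (mul_eq_zero.mp this).resolve_left (sub_ne_zero.mpr ht)

lemma prod_gaussSum_eq_gaussSum_prod_mul [IsDomain R] {χ : ι → MulChar F R}
    (hχ : ∏ i, χ i ≠ 1) (ψ : AddChar F R) :
    ∏ i, gaussSum (χ i) ψ = gaussSum (∏ i, χ i) ψ * multiJacobiSum χ 1 := by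
  calc ∏ i, gaussSum (χ i) ψ
      = ∑ m : ι → Fˣ, ψ (∑ i, (m i : F)) * ∏ i, χ i (m i) := by
        simp only [gaussSum_eq_sum_units, prod_univ_sum, prod_mul_distrib,
          AddChar.map_sum_eq_prod, mul_comm]
        rfl
    _ = ∑ s : F, ψ s * multiJacobiSum χ s := by
        rw [← sum_fiberwise univ fun m : ι → Fˣ => ∑ i, (m i : F)]
        refine sum_congr rfl fun s _ => ?_
        rw [multiJacobiSum, mul_sum]
        exact sum_congr rfl fun m hm => by rw [(mem_filter.mp hm).2]
    _ = ∑ s : F, (∏ i, χ i) s * ψ s * multiJacobiSum χ 1 := by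
        refine sum_congr rfl fun s _ => ?_
        rcases eq_or_ne s 0 with rfl | hs
        · rw [multiJacobiSum_zero hχ, MulChar.map_zero, mul_zero, zero_mul, zero_mul]
        · have h := multiJacobiSum_unit_mul χ (Units.mk0 s hs) 1
          rw [Units.val_mk0, mul_one] at h
          rw [h]
          ring
    _ = gaussSum (∏ i, χ i) ψ * multiJacobiSum χ 1 := by rw [gaussSum, sum_mul]

lemma norm_multiJacobiSum {χ : ι → MulChar F ℂ} (hχ : ∀ i, χ i ≠ 1) (hprod : ∏ i, χ i ≠ 1) :
    ‖multiJacobiSum χ 1‖ = (Fintype.card F : ℝ) ^ (((Fintype.card ι : ℝ) - 1) / 2) := by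
  have hψ := AddChar.FiniteField.primitiveChar_to_Complex_isPrimitive F
  have h := congrArg norm (prod_gaussSum_eq_gaussSum_prod_mul hprod
    (AddChar.FiniteField.primitiveChar_to_Complex F))
  simp only [norm_prod, norm_mul, norm_gaussSum (hχ _) hψ, norm_gaussSum hprod hψ, prod_const,
    card_univ, Real.sqrt_eq_rpow] at h
  have hq : (0 : ℝ) < Fintype.card F := by exact_mod_cast Fintype.card_pos
  rw [← Real.rpow_natCast, ← Real.rpow_mul hq.le] at h
  rw [sub_div, Real.rpow_sub hq, eq_div_iff (by positivity), mul_comm, ← h]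
  ring_nf

lemma map_multiJacobiSum {R' : Type*} [CommRing R'] (f : R →+* R') (χ : ι → MulChar F R)
    (s : F) :
    f (multiJacobiSum χ s) = multiJacobiSum (fun i => (χ i).ringHomComp f) s := by
  simp [multiJacobiSum, map_sum, map_prod]

lemma norm_map_multiJacobiSum {f : R →+* ℂ} (hf : Function.Injective f) {χ : ι → MulChar F R}
    (hχ : ∀ i, χ i ≠ 1) (hprod : ∏ i, χ i ≠ 1) :
    ‖f (multiJacobiSum χ 1)‖ = (Fintype.card F : ℝ) ^ (((Fintype.card ι : ℝ) - 1) / 2) := by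
  rw [map_multiJacobiSum]
  refine norm_multiJacobiSum (fun i => (MulChar.ringHomComp_ne_one_iff hf).mpr (hχ i)) ?_
  convert (MulChar.ringHomComp_ne_one_iff hf).mpr hprod using 1
  exact (map_prod (MulChar.ringHomCompHom f) χ _).symm

end MultiJacobiSum

section RootsOfUnity

variable (d : ℕ) (hd : d ∣ Fintype.card κ - 1)

def toMuHom : κˣ →* rootsOfUnity d κ where
  toFun := toMu d hd
  map_one' := Subtype.ext (one_pow _)
  map_mul' a b := Subtype.ext (mul_pow a b _)

lemma toMu_surjective : Function.Surjective (toMu d hd) := by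
  set e := (Fintype.card κ - 1) / d
  have hcard : Nat.card κˣ = e * d := by
    rw [Nat.card_eq_fintype_card, Fintype.card_units, Nat.div_mul_cancel hd]
  have he : 0 < e := Nat.pos_of_mul_pos_right (hcard ▸ Nat.card_pos)
  have : NeZero d := ⟨(Nat.pos_of_mul_pos_left (hcard ▸ Nat.card_pos)).ne'⟩
  have hrange : (powMonoidHom e : κˣ →* κˣ).range = rootsOfUnity d κ := by
    refine Subgroup.eq_of_le_of_card_ge ?_ ?_
    · rintro _ ⟨x, rfl⟩
      rw [mem_rootsOfUnity, powMonoidHom_apply, ← pow_mul, ← hcard, pow_card_eq_one']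
    · rw [IsCyclic.card_powMonoidHom_range, hcard, Nat.gcd_mul_right_left,
        Nat.mul_div_cancel_left _ he]
      exact card_rootsOfUnity κ d
  intro y
  obtain ⟨x, hx⟩ : (y : κˣ) ∈ (powMonoidHom e : κˣ →* κˣ).range := by
    rw [hrange]
    exact y.2
  exact ⟨x, Subtype.ext hx⟩

def toMulChar {R : Type*} [CommRing R] : (rootsOfUnity d κ →* Rˣ) →* MulChar κ R :=
  MulChar.mulEquivToUnitHom.symm.toMonoidHom.comp (MonoidHom.compHom' (toMuHom d hd))

variable {d hd} in
@[simp]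
lemma toMulChar_apply_units {R : Type*} [CommRing R] (ν : rootsOfUnity d κ →* Rˣ) (u : κˣ) :
    toMulChar d hd ν u = ν (toMu d hd u) := by
  simp [toMulChar, toMuHom]

lemma toMulChar_injective {R : Type*} [CommRing R] :
    Function.Injective (toMulChar d hd (R := R)) :=
  MulChar.mulEquivToUnitHom.symm.injective.comp fun _ _ h =>
    (MonoidHom.cancel_right (toMu_surjective d hd)).mp h

lemma jSum_eq_multiJacobiSum {n : ℕ} (χ : Fin n → (rootsOfUnity d κ →* ℂˣ)) :
    jSum d hd χ = (-1) ^ (n - 1) * multiJacobiSum (fun i => toMulChar d hd (χ i)) 1 := by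
  simp [jSum, multiJacobiSum]

end RootsOfUnity

def algebraicClosureMulCharEquiv (M k L : Type*) [CommMonoid M] [Finite Mˣ] [Field k] [Field L]
    [Algebra k L] : MulChar M (algebraicClosure k L) ≃* MulChar M L :=
  MulEquiv.ofBijective (MulChar.ringHomCompHom (algebraMap (algebraicClosure k L) L))
    ⟨MulChar.injective_ringHomComp (algebraMap (algebraicClosure k L) L).injective, fun χ =>
      ⟨{ toFun a := ⟨χ a, χ.isIntegral_apply a⟩
         map_one' := Subtype.ext χ.map_one
         map_mul' a b := Subtype.ext (χ.map_mul a b)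
         map_nonunit' _ ha := Subtype.ext (χ.map_nonunit ha) }, rfl⟩⟩

@[simp]
lemma ringHomComp_algebraicClosureMulCharEquiv_symm {M k L : Type*} [CommMonoid M] [Finite Mˣ]
    [Field k] [Field L] [Algebra k L] (χ : MulChar M L) :
    ((algebraicClosureMulCharEquiv M k L).symm χ).ringHomComp (algebraMap _ L) = χ :=
  (algebraicClosureMulCharEquiv M k L).apply_symm_apply χ

lemma exists_algHom_algebraicClosure_apply_eq {k L : Type*} [Field k] [Field L] [IsAlgClosed L]
    [Algebra k L] (x : algebraicClosure k L) {z : L}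
    (hz : Polynomial.aeval z (minpoly k (algebraMap _ L x)) = 0) :
    ∃ σ : algebraicClosure k L →ₐ[k] L, σ x = z := by
  rw [minpoly.algebraMap_eq (algebraMap (algebraicClosure k L) L).injective] at hz
  exact IntermediateField.exists_algHom_of_splits_of_aeval
    (fun s => ⟨(Algebra.IsAlgebraic.isAlgebraic s).isIntegral, IsAlgClosed.splits _⟩) hz

theorem jSum_isWeilNumber_general (d : ℕ) (hd : d ∣ Fintype.card κ - 1)
    {n : ℕ} (χ : Fin n → (rootsOfUnity d κ →* ℂˣ))
    (h1 : ∀ i, χ i ≠ 1) (hprod : (∏ i, χ i) ≠ 1) :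
    IsAlgebraic ℚ (jSum d hd χ) ∧
      ∀ z : ℂ, Polynomial.aeval z (minpoly ℚ (jSum d hd χ)) = 0 →
        ‖z‖ = (Fintype.card κ : ℝ) ^ (((n : ℝ) - 1) / 2) := by
  set φ : (rootsOfUnity d κ →* ℂˣ) →* MulChar κ (algebraicClosure ℚ ℂ) :=
    (algebraicClosureMulCharEquiv κ ℚ ℂ).symm.toMonoidHom.comp (toMulChar d hd)
  have hφ : Function.Injective φ :=
    (algebraicClosureMulCharEquiv κ ℚ ℂ).symm.injective.comp (toMulChar_injective d hd)
  set χK : Fin n → MulChar κ (algebraicClosure ℚ ℂ) := fun i => φ (χ i)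
  have hχK : ∀ i, χK i ≠ 1 := fun i => (map_ne_one_iff φ hφ).mpr (h1 i)
  have hprodK : ∏ i, χK i ≠ 1 := by
    simpa only [χK, map_prod] using (map_ne_one_iff φ hφ).mpr hprod
  set jK : algebraicClosure ℚ ℂ := (-1) ^ (n - 1) * multiJacobiSum χK 1
  have hjK : algebraMap _ ℂ jK = jSum d hd χ := by
    rw [jSum_eq_multiJacobiSum, map_mul, map_pow, map_neg, map_one, map_multiJacobiSum]
    simp [χK, φ]
  have hnorm (σ : algebraicClosure ℚ ℂ →+* ℂ) :
      ‖σ jK‖ = (Fintype.card κ : ℝ) ^ (((n : ℝ) - 1) / 2) := by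
    rw [map_mul, map_pow, map_neg, map_one, norm_mul, norm_pow, norm_neg, norm_one, one_pow,
      one_mul, norm_map_multiJacobiSum σ.injective hχK hprodK, Fintype.card_fin]
  refine ⟨hjK ▸ mem_algebraicClosure_iff.mp jK.2, fun z hz => ?_⟩
  obtain ⟨σ, rfl⟩ := exists_algHom_algebraicClosure_apply_eq jK (hjK ▸ hz)
  exact hnorm σ

/-- If none of `χ₁, …, χₙ` and `χ₁⋯χₙ` is trivial, then the Jacobi sum
`j(χ₁,…,χₙ)` is an algebraic number all of whose conjugates (complex roots of its minimal
polynomial over `ℚ`) have absolute value `q^((n-1)/2)`, i.e. it is a `q`-Weil number of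
weight `n - 1`. -/
theorem jSum_isWeilNumber (d : ℕ) (hd0 : 0 < d) (hd : d ∣ Fintype.card κ - 1)
    {n : ℕ} (χ : Fin n → (rootsOfUnity d κ →* ℂˣ))
    (h1 : ∀ i, χ i ≠ 1) (hprod : (∏ i, χ i) ≠ 1) :
    IsAlgebraic ℚ (jSum d hd χ) ∧
      ∀ z : ℂ, Polynomial.aeval z (minpoly ℚ (jSum d hd χ)) = 0 →
        ‖z‖ = (Fintype.card κ : ℝ) ^ (((n : ℝ) - 1) / 2) :=
  jSum_isWeilNumber_general d hd χ h1 hprod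

end MotivicGJ
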